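/- If two semiformal pathways p1 and p2 have the same signature, then for any reaction r, the pathways p1 + (r) and p2 + (r) also have the same signature. -/

import Mathlib

namespace CRNVerif

variable {σ : Type} [DecidableEq σ]

/-- A state is a multiset of species. -/
abbrev State (σ : Type) := Multiset σ
/-- A reaction is a pair (reactants, products) of multisets of species. -/
abbrev Reaction (σ : Type) := Multiset σ × Multiset σ
/-- A pathway is a finite sequence of reactions. -/
abbrev Pathway (σ : Type) := List (Reaction σ)

/-- Result of applying reaction `r` in state `S` (i.e. `S ⊕ r`). -/
def applyRxn (S : State σ) (r : Reaction σ) : State σ := S - r.1 + r.2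

/-- Minimal initial state of a pathway: the smallest state in which
its reactions can occur in succession. -/
def minInit : Pathway σ → State σ
  | [] => 0
  | r :: p => r.1 + (minInit p - r.2)

/-- State reached from `S` after performing all reactions of `p` in order. -/
def finalFrom (S : State σ) : Pathway σ → State σ
  | [] => S
  | r :: p => finalFrom (applyRxn S r) p

/-- The final state of a pathway (starting from its minimal initial state). -/
def finalState (p : Pathway σ) : State σ := finalFrom (minInit p) p

/-- The state `S_i` after the first `i` reactions, starting from the minimal initial state. -/
def stateAt (p : Pathway σ) (i : ℕ) : State σ := finalFrom (minInit p) (p.take i)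

/-- A state is formal if it contains only formal species (as given by `fm`). -/
def FormalState (fm : σ → Bool) (S : State σ) : Prop := ∀ x ∈ S, fm x = true

/-- `Formal(S)`: the multiset obtained by removing all intermediate species from `S`. -/
def formalPart (fm : σ → Bool) (S : State σ) : State σ := S.filter (fun x => fm x = true)

/-- A reaction is trivial if reactants equal products. -/
def TrivialRxn (r : Reaction σ) : Prop := r.1 = r.2

/-- A CRN is a (finite) set of nontrivial reactions. -/
def NontrivialRxns (C : Finset (Reaction σ)) : Prop := ∀ r ∈ C, ¬ TrivialRxn r

/-- A formal CRN contains only formal reactions. -/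
def IsFormalCRN (fm : σ → Bool) (C : Finset (Reaction σ)) : Prop :=
  ∀ r ∈ C, FormalState fm r.1 ∧ FormalState fm r.2

/-- `p` is a pathway of the CRN `C`. -/
def PathwayOf (C : Finset (Reaction σ)) (p : Pathway σ) : Prop := ∀ r ∈ p, r ∈ C

/-- `Interleave l₁ l₂ l`: `l` can be partitioned into the two (order-preserving,
not necessarily contiguous) subsequences `l₁` and `l₂`. -/
inductive Interleave {α : Type u} : List α → List α → List α → Prop
  | nil : Interleave [] [] []
  | left {a : α} {l₁ l₂ l : List α} : Interleave l₁ l₂ l → Interleave (a :: l₁) l₂ (a :: l)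
  | right {a : α} {l₁ l₂ l : List α} : Interleave l₁ l₂ l → Interleave l₁ (a :: l₂) (a :: l)

/-- `InterleaveMany qs p`: `p` is generated by interleaving the lists in `qs`. -/
inductive InterleaveMany {α : Type u} : List (List α) → List α → Prop
  | nil : InterleaveMany [] []
  | cons {q r p : List α} {qs : List (List α)} :
      Interleave q r p → InterleaveMany qs r → InterleaveMany (q :: qs) p

/-- A pathway is semiformal if its minimal initial state is formal. -/
def Semiformal (fm : σ → Bool) (p : Pathway σ) : Prop := FormalState fm (minInit p)

/-- A formal pathway: a (nonempty) pathway whose minimal initial state and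
final state are both formal. -/
def FormalPathway (fm : σ → Bool) (p : Pathway σ) : Prop :=
  p ≠ [] ∧ FormalState fm (minInit p) ∧ FormalState fm (finalState p)

/-- A formal pathway is decomposable if it can be partitioned into two nonempty
subsequences that are each formal pathways. -/
def FDecomposable (fm : σ → Bool) (p : Pathway σ) : Prop :=
  ∃ q₁ q₂, q₁ ≠ [] ∧ q₂ ≠ [] ∧ Interleave q₁ q₂ p ∧
    FormalPathway fm q₁ ∧ FormalPathway fm q₂

/-- A prime formal pathway is a formal pathway that is not decomposable. -/
def PrimePathway (fm : σ → Bool) (p : Pathway σ) : Prop :=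
  FormalPathway fm p ∧ ¬ FDecomposable fm p

/-- The formal basis: the set of (initial state, final state) pairs of prime
formal pathways of `C`. -/
def formalBasis (fm : σ → Bool) (C : Finset (Reaction σ)) : Set (Reaction σ) :=
  { r | ∃ p, PathwayOf C p ∧ PrimePathway fm p ∧ r = (minInit p, finalState p) }

/-- Two sets of reactions are equal up to addition/removal of trivial reactions. -/
def EqUpToTrivial (A B : Set (Reaction σ)) : Prop :=
  {r ∈ A | ¬ TrivialRxn r} = {r ∈ B | ¬ TrivialRxn r}

/-- The reaction at (0-based) index `j` of `p` is a turning point: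
before it only formal species of the initial state appear, from it on only formal
species of the final state appear, and at the moment the turning point fires,
no formal species are left over. -/
def TurningAt (fm : σ → Bool) (p : Pathway σ) (j : ℕ) : Prop :=
  ∃ h : j < p.length,
    (∀ i ≤ j, formalPart fm (stateAt p i) ≤ minInit p) ∧
    (∀ i, j < i → i ≤ p.length → formalPart fm (stateAt p i) ≤ finalState p) ∧
    formalPart fm (stateAt p j - (p.get ⟨j, h⟩).1) = 0

/-- A regular formal pathway: one that implements a formal reaction,
i.e. has a turning point. -/
def RegularPathway (fm : σ → Bool) (p : Pathway σ) : Prop :=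
  FormalPathway fm p ∧ ∃ j, TurningAt fm p j

/-- A CRN is regular if every prime formal pathway is regular. -/
def RegularCRN (fm : σ → Bool) (C : Finset (Reaction σ)) : Prop :=
  ∀ p, PathwayOf C p → PrimePathway fm p → RegularPathway fm p

/-- `q` is a strong closing pathway for `p` (within CRN `C`): it can occur in the
final state of `p`, consumes no formal species, and leads back to a formal state. -/
def ClosingPathway (fm : σ → Bool) (C : Finset (Reaction σ)) (p q : Pathway σ) : Prop :=
  PathwayOf C q ∧ minInit q ≤ finalState p ∧ (∀ r ∈ q, formalPart fm r.1 = 0) ∧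
  FormalState fm (finalFrom (finalState p) q)

/-- A CRN is strongly tidy if every semiformal pathway has a strong closing pathway. -/
def StronglyTidy (fm : σ → Bool) (C : Finset (Reaction σ)) : Prop :=
  ∀ p, PathwayOf C p → Semiformal fm p → ∃ q, ClosingPathway fm C p q

/-- A semiformal pathway is decomposable if it can be partitioned into two
nonempty subsequences that are each semiformal. -/
def SDecomposable (fm : σ → Bool) (p : Pathway σ) : Prop :=
  ∃ q₁ q₂, q₁ ≠ [] ∧ q₂ ≠ [] ∧ Interleave q₁ q₂ p ∧ Semiformal fm q₁ ∧ Semiformal fm q₂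

/-- The width of a pathway: the maximum size of the states it passes through. -/
def width (p : Pathway σ) : ℕ :=
  ((List.range (p.length + 1)).map (fun i => Multiset.card (stateAt p i))).foldr max 0

/-- The branching factor of a CRN. -/
def branching (C : Finset (Reaction σ)) : ℕ :=
  C.sup (fun r => max (Multiset.card r.1) (Multiset.card r.2))

/-- Formal state `T` is reachable from `S` via reactions of `C`. -/
def Reachable (C : Finset (Reaction σ)) (S T : State σ) : Prop :=
  ∃ p, PathwayOf C p ∧ minInit p ≤ S ∧ finalFrom S p = T

/-- `C` and `C'` share no intermediate species: any species occurring in both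
CRNs is formal. -/
def NoSharedIntermediates (fm : σ → Bool) (C C' : Finset (Reaction σ)) : Prop :=
  ∀ r ∈ C, ∀ r' ∈ C', ∀ x : σ, x ∈ r.1 + r.2 → x ∈ r'.1 + r'.2 → fm x = true

/-- The formal closure of a pathway: the minimal state containing the formal part
of every state along the pathway. -/
def formalClosure (fm : σ → Bool) (p : Pathway σ) : State σ :=
  ((List.range (p.length + 1)).map (fun i => formalPart fm (stateAt p i))).foldr (· ∪ ·) 0

/-- The decomposed final states of a semiformal pathway: all pairs of final
states arising from decompositions into two (nonempty) semiformal pathways. -/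
def DFS (fm : σ → Bool) (p : Pathway σ) : Set (State σ × State σ) :=
  { T | ∃ q₁ q₂, q₁ ≠ [] ∧ q₂ ≠ [] ∧ Interleave q₁ q₂ p ∧
        Semiformal fm q₁ ∧ Semiformal fm q₂ ∧ T = (finalState q₁, finalState q₂) }

/-- The minimal state containing the formal parts of all states strictly after index `j`. -/
def rfsAt (fm : σ → Bool) (p : Pathway σ) (j : ℕ) : State σ :=
  (((List.range (p.length + 1)).filter (fun i => j < i)).map
      (fun i => formalPart fm (stateAt p i))).foldr (· ∪ ·) 0

/-- The regular final states of a pathway: the minimal states `T` witnessed by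
potential turning point reactions. -/
def RFS (fm : σ → Bool) (p : Pathway σ) : Set (State σ) :=
  { T | ∃ j, ∃ h : j < p.length,
      (∀ i ≤ j, formalPart fm (stateAt p i) ≤ minInit p) ∧
      formalPart fm (stateAt p j - (p.get ⟨j, h⟩).1) = 0 ∧
      T = rfsAt fm p j }

/-- The signature of a semiformal pathway: (initial state, final state, width,
formal closure, DFS, RFS). -/
def signature (fm : σ → Bool) (p : Pathway σ) :
    State σ × State σ × ℕ × State σ × Set (State σ × State σ) × Set (State σ) :=
  (minInit p, finalState p, width p, formalClosure fm p, DFS fm p, RFS fm p)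

/-- An annotated prime pathway: exactly its chosen turning point is annotated,
with the corresponding formal basis reaction. -/
def GoodAnnotation (fm : σ → Bool) (ap : List (Reaction σ × Option (Reaction σ))) : Prop :=
  PrimePathway fm (ap.map Prod.fst) ∧
  ∃ j, TurningAt fm (ap.map Prod.fst) j ∧
    ap.map Prod.snd = (List.range ap.length).map
      (fun i => if i = j then
          some (minInit (ap.map Prod.fst), finalState (ap.map Prod.fst)) else none)

/-- `p` can be interpreted as `q`: `q` can occur in the initial state of `p`, has
the same net effect, and there is a decomposition of `p` into prime formal pathways
such that replacing a chosen turning point of each by the corresponding formal basis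
element and removing all other reactions yields `q`. -/
def Interpreted (fm : σ → Bool) (p q : Pathway σ) : Prop :=
  minInit q ≤ minInit p ∧
  finalFrom (minInit p) q = finalState p ∧
  ∃ ap : List (Reaction σ × Option (Reaction σ)),
    ap.map Prod.fst = p ∧ (ap.map Prod.snd).reduceOption = q ∧
    ∃ aps, InterleaveMany aps ap ∧ ∀ a ∈ aps, GoodAnnotation fm a

/-!
Appending `r` to `p` shifts every state of `p` by the same multiset `r.1 - finalState p`, the
species that `r` needs beyond what `p` produces, and adds one more final state. Every component
of the signature of `p ++ [r]` is therefore a function of the signature of `p` and of `r`: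
width, formal closure and the states of `RFS` are shifted suprema over the states of `p`, plus
the new final state. In a split of `p ++ [r]` into two semiformal pathways, `r` ends one of
them, so the split comes from a split of `p` or is the split `([r], p)`; that split is
available exactly for nonempty semiformal `p`, and `p = []` is read off the width and `RFS`.
-/

theorem _root_.List.foldr_sup_map_eq_sup_toFinset {ι α : Type*} [SemilatticeSup α] [OrderBot α]
    [DecidableEq ι] (l : List ι) (f : ι → α) :
    (l.map f).foldr (· ⊔ ·) ⊥ = l.toFinset.sup f := by
  induction l with
  | nil => rfl
  | cons a l ih => simp [ih]

theorem _root_.Finset.sup_add_const {ι α : Type*} [SemilatticeSup α] [OrderBot α] [Add α]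
    {s : Finset ι} (hs : s.Nonempty) (f : ι → α) (e : α)
    (h : ∀ a b : α, a ⊔ b + e = (a + e) ⊔ (b + e)) :
    s.sup (fun i => f i + e) = s.sup f + e := by
  rw [← Finset.sup'_eq_sup hs, ← Finset.sup'_eq_sup hs]
  exact (Finset.apply_sup'_eq_sup'_comp hs (· + e) h).symm

variable (fm : σ → Bool)

omit [DecidableEq σ] in
theorem formalPart_add (S T : State σ) :
    formalPart fm (S + T) = formalPart fm S + formalPart fm T :=
  Multiset.filter_add _ _ _

theorem formalPart_add_le_add_iff (A M D : State σ) :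
    formalPart fm (A + D) ≤ M + D ↔ formalPart fm A ≤ M := by
  simp only [Multiset.le_iff_count, formalPart, Multiset.count_filter, Multiset.count_add]
  refine forall_congr' fun x => ?_
  split_ifs <;> omega

theorem formalPart_add_tsub_eq_zero_iff {A C : State σ} (D : State σ) (hC : C ≤ A) :
    formalPart fm (A + D - C) = 0 ↔ formalPart fm (A - C) = 0 ∧ formalPart fm D = 0 := by
  rw [← tsub_add_eq_add_tsub hC, formalPart_add, add_eq_zero]

@[simp]
theorem minInit_nil : minInit ([] : Pathway σ) = 0 := rfl

@[simp]
theorem finalState_nil : finalState ([] : Pathway σ) = 0 := rfl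

theorem finalFrom_eq (p : Pathway σ) (S : State σ) :
    finalFrom S p = S - minInit p + finalState p := by
  induction p generalizing S with
  | nil => simp [finalFrom, minInit, finalState]
  | cons r p ih =>
    rw [finalState, finalFrom, finalFrom, ih, ih]
    ext x
    simp only [applyRxn, minInit, Multiset.count_add, Multiset.count_sub]
    omega

theorem finalFrom_append (p q : Pathway σ) (S : State σ) :
    finalFrom S (p ++ q) = finalFrom (finalFrom S p) q := by
  induction p generalizing S with
  | nil => rfl
  | cons r p ih => exact ih _

theorem minInit_append (p q : Pathway σ) :
    minInit (p ++ q) = minInit p + (minInit q - finalState p) := by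
  induction p with
  | nil => simp
  | cons r p ih =>
    have hfin : finalState (r :: p) = applyRxn (minInit (r :: p)) r - minInit p + finalState p :=
      finalFrom_eq p _
    rw [hfin, List.cons_append]
    ext x
    simp only [minInit, ih, applyRxn, Multiset.count_add, Multiset.count_sub]
    omega

theorem minInit_singleton (r : Reaction σ) : minInit [r] = r.1 := by
  simp [minInit]

theorem minInit_concat (p : Pathway σ) (r : Reaction σ) :
    minInit (p ++ [r]) = minInit p + (r.1 - finalState p) := by
  rw [minInit_append, minInit_singleton]

theorem finalState_concat (p : Pathway σ) (r : Reaction σ) :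
    finalState (p ++ [r]) = finalState p - r.1 + r.2 := by
  rw [finalState, minInit_concat, finalFrom_append, finalFrom_eq p]
  simp only [finalFrom, applyRxn]
  ext x
  simp only [Multiset.count_add, Multiset.count_sub]
  omega

omit [DecidableEq σ] in
theorem formalState_add (A B : State σ) :
    FormalState fm (A + B) ↔ FormalState fm A ∧ FormalState fm B := by
  simp only [FormalState, Multiset.mem_add, or_imp, forall_and]

theorem semiformal_concat_iff (p : Pathway σ) (r : Reaction σ) :
    Semiformal fm (p ++ [r]) ↔ Semiformal fm p ∧ FormalState fm (r.1 - finalState p) := by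
  rw [Semiformal, minInit_concat, formalState_add, Semiformal]

theorem minInit_take_le (p : Pathway σ) (i : ℕ) : minInit (p.take i) ≤ minInit p := by
  conv_rhs => rw [← List.take_append_drop i p, minInit_append]
  exact Multiset.le_add_right _ _

theorem stateAt_length (p : Pathway σ) : stateAt p p.length = finalState p := by
  rw [stateAt, List.take_length, finalState]

theorem stateAt_concat (p : Pathway σ) (r : Reaction σ) {i : ℕ} (hi : i ≤ p.length) :
    stateAt (p ++ [r]) i = stateAt p i + (r.1 - finalState p) := by
  rw [stateAt, stateAt, List.take_append_of_le_length hi, minInit_concat, finalFrom_eq,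
    finalFrom_eq]
  ext x
  have hle := Multiset.count_le_of_le x (minInit_take_le p i)
  simp only [Multiset.count_add, Multiset.count_sub]
  omega

theorem stateAt_concat_length (p : Pathway σ) (r : Reaction σ) :
    stateAt (p ++ [r]) (p.length + 1) = finalState (p ++ [r]) := by
  simpa using stateAt_length (p ++ [r])

theorem reactants_le_stateAt (p : Pathway σ) {j : ℕ} (h : j < p.length) :
    p[j].1 ≤ stateAt p j := by
  have hsplit : minInit p = minInit (p.take j) + (minInit (p.drop j) - finalState (p.take j)) := by
    rw [← minInit_append, List.take_append_drop]
  have hdrop : minInit (p.drop j) = p[j].1 + (minInit (p.drop (j + 1)) - p[j].2) := by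
    rw [List.drop_eq_getElem_cons h, minInit]
  rw [Multiset.le_iff_count]
  intro x
  have c₁ := congrArg (Multiset.count x) hsplit
  have c₂ := congrArg (Multiset.count x) hdrop
  simp only [Multiset.count_add, Multiset.count_sub] at c₁ c₂
  simp only [stateAt, finalFrom_eq, Multiset.count_add, Multiset.count_sub]
  omega

theorem width_eq_sup (p : Pathway σ) :
    width p = (Finset.range (p.length + 1)).sup fun i => Multiset.card (stateAt p i) := by
  rw [width, ← List.toFinset_range]
  exact List.foldr_sup_map_eq_sup_toFinset _ _

theorem formalClosure_eq_sup (p : Pathway σ) :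
    formalClosure fm p =
      (Finset.range (p.length + 1)).sup fun i => formalPart fm (stateAt p i) := by
  rw [formalClosure, ← List.toFinset_range]
  exact List.foldr_sup_map_eq_sup_toFinset _ _

theorem rfsAt_eq_sup (p : Pathway σ) (j : ℕ) :
    rfsAt fm p j = (Finset.Ioc j p.length).sup fun i => formalPart fm (stateAt p i) := by
  have hIoc : ((List.range (p.length + 1)).filter (fun i => j < i)).toFinset =
      Finset.Ioc j p.length := by
    ext i
    simp only [List.mem_toFinset, List.mem_filter, List.mem_range, decide_eq_true_eq,
      Finset.mem_Ioc]
    omega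
  rw [rfsAt, ← hIoc]
  exact List.foldr_sup_map_eq_sup_toFinset _ _

theorem width_concat (p : Pathway σ) (r : Reaction σ) :
    width (p ++ [r]) =
      max (Multiset.card (finalState (p ++ [r])))
        (width p + Multiset.card (r.1 - finalState p)) := by
  have hshift : ∀ i ∈ Finset.range (p.length + 1), Multiset.card (stateAt (p ++ [r]) i) =
      Multiset.card (stateAt p i) + Multiset.card (r.1 - finalState p) := fun i hi => by
    rw [stateAt_concat p r (Finset.mem_range_succ_iff.mp hi), Multiset.card_add]
  rw [width_eq_sup, width_eq_sup, List.length_append, List.length_singleton,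
    Finset.range_add_one, Finset.sup_insert, stateAt_concat_length, Finset.sup_congr rfl hshift,
    Finset.sup_add_const Finset.nonempty_range_add_one _ _ fun a b =>
      (max_add_add_right a b _).symm]

theorem formalClosure_concat (p : Pathway σ) (r : Reaction σ) :
    formalClosure fm (p ++ [r]) = formalPart fm (finalState (p ++ [r])) ∪
      (formalClosure fm p + formalPart fm (r.1 - finalState p)) := by
  have hshift : ∀ i ∈ Finset.range (p.length + 1), formalPart fm (stateAt (p ++ [r]) i) =
      formalPart fm (stateAt p i) + formalPart fm (r.1 - finalState p) := fun i hi => by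
    rw [stateAt_concat p r (Finset.mem_range_succ_iff.mp hi), formalPart_add]
  rw [formalClosure_eq_sup, formalClosure_eq_sup, List.length_append, List.length_singleton,
    Finset.range_add_one, Finset.sup_insert, stateAt_concat_length, Finset.sup_congr rfl hshift,
    Finset.sup_add_const Finset.nonempty_range_add_one _ _ fun a b =>
      Multiset.union_add_distrib a b _]
  rfl

theorem formalClosure_le_iff (p : Pathway σ) (M : State σ) :
    formalClosure fm p ≤ M ↔ ∀ i ≤ p.length, formalPart fm (stateAt p i) ≤ M := by
  simp [formalClosure_eq_sup, Finset.sup_le_iff]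

theorem rfsAt_concat_of_lt (p : Pathway σ) (r : Reaction σ) {j : ℕ} (hj : j < p.length) :
    rfsAt fm (p ++ [r]) j = formalPart fm (finalState (p ++ [r])) ∪
      (rfsAt fm p j + formalPart fm (r.1 - finalState p)) := by
  have hshift : ∀ i ∈ Finset.Ioc j p.length, formalPart fm (stateAt (p ++ [r]) i) =
      formalPart fm (stateAt p i) + formalPart fm (r.1 - finalState p) := fun i hi => by
    rw [stateAt_concat p r (Finset.mem_Ioc.mp hi).2, formalPart_add]
  rw [rfsAt_eq_sup, rfsAt_eq_sup, List.length_append, List.length_singleton,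
    ← Finset.insert_Ioc_right_eq_Ioc_add_one hj.le, Finset.sup_insert, stateAt_concat_length,
    Finset.sup_congr rfl hshift,
    Finset.sup_add_const (Finset.nonempty_Ioc.mpr hj) _ _ fun a b =>
      Multiset.union_add_distrib a b _]
  rfl

theorem rfsAt_concat_length (p : Pathway σ) (r : Reaction σ) :
    rfsAt fm (p ++ [r]) p.length = formalPart fm (finalState (p ++ [r])) := by
  rw [rfsAt_eq_sup, List.length_append, List.length_singleton, Nat.Ioc_succ_singleton,
    Finset.sup_singleton, stateAt_concat_length]

def PotentialTurningAt (p : Pathway σ) (j : ℕ) : Prop :=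
  ∃ h : j < p.length,
    (∀ i ≤ j, formalPart fm (stateAt p i) ≤ minInit p) ∧
    formalPart fm (stateAt p j - (p.get ⟨j, h⟩).1) = 0

theorem RFS_eq_image (p : Pathway σ) :
    RFS fm p = rfsAt fm p '' {j | PotentialTurningAt fm p j} := by
  ext T
  simp only [RFS, PotentialTurningAt, Set.mem_image, Set.mem_ofPred_eq]
  grind

theorem formalPart_stateAt_concat_le_iff (p : Pathway σ) (r : Reaction σ) {j : ℕ}
    (hj : j ≤ p.length) :
    (∀ i ≤ j, formalPart fm (stateAt (p ++ [r]) i) ≤ minInit (p ++ [r])) ↔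
      ∀ i ≤ j, formalPart fm (stateAt p i) ≤ minInit p := by
  refine forall₂_congr fun i hi => ?_
  rw [stateAt_concat p r (hi.trans hj), minInit_concat, formalPart_add_le_add_iff]

theorem potentialTurningAt_concat_of_lt (p : Pathway σ) (r : Reaction σ) {j : ℕ}
    (hj : j < p.length) :
    PotentialTurningAt fm (p ++ [r]) j ↔
      PotentialTurningAt fm p j ∧ formalPart fm (r.1 - finalState p) = 0 := by
  have hlt : j < (p ++ [r]).length := by simp; omega
  simp only [PotentialTurningAt, List.get_eq_getElem, exists_prop_of_true hj,
    exists_prop_of_true hlt, formalPart_stateAt_concat_le_iff fm p r hj.le,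
    List.getElem_append_left hj, stateAt_concat p r hj.le,
    formalPart_add_tsub_eq_zero_iff fm _ (reactants_le_stateAt p hj), and_assoc]

theorem potentialTurningAt_concat_length (p : Pathway σ) (r : Reaction σ) :
    PotentialTurningAt fm (p ++ [r]) p.length ↔
      formalClosure fm p ≤ minInit p ∧ formalPart fm (finalState p - r.1) = 0 := by
  have hlt : p.length < (p ++ [r]).length := by simp
  have hsub : stateAt p p.length + (r.1 - finalState p) - r.1 = finalState p - r.1 := by
    rw [stateAt_length]
    ext x
    simp only [Multiset.count_add, Multiset.count_sub]
    omega
  simp only [PotentialTurningAt, List.get_eq_getElem, exists_prop_of_true hlt,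
    formalPart_stateAt_concat_le_iff fm p r le_rfl, ← formalClosure_le_iff,
    List.getElem_concat_length, stateAt_concat p r le_rfl, hsub]

theorem RFS_concat (p : Pathway σ) (r : Reaction σ) :
    RFS fm (p ++ [r]) =
      {T | formalPart fm (r.1 - finalState p) = 0 ∧
          ∃ T' ∈ RFS fm p, T = formalPart fm (finalState (p ++ [r])) ∪ T'} ∪
      {T | formalClosure fm p ≤ minInit p ∧ formalPart fm (finalState p - r.1) = 0 ∧
          T = formalPart fm (finalState (p ++ [r]))} := by
  ext T
  simp only [RFS_eq_image, Set.mem_image, Set.mem_union, Set.mem_ofPred_eq]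
  constructor
  · rintro ⟨j, hj, rfl⟩
    rcases (show j < p.length ∨ j = p.length by have := hj.1; simp at this; omega) with hj' | rfl
    · obtain ⟨hpt, hzero⟩ := (potentialTurningAt_concat_of_lt fm p r hj').mp hj
      exact Or.inl ⟨hzero, _, ⟨j, hpt, rfl⟩,
        by rw [rfsAt_concat_of_lt fm p r hj', hzero, add_zero]⟩
    · obtain ⟨hfc, hfin⟩ := (potentialTurningAt_concat_length fm p r).mp hj
      exact Or.inr ⟨hfc, hfin, rfsAt_concat_length fm p r⟩
  · rintro (⟨hzero, _, ⟨j, hpt, rfl⟩, rfl⟩ | ⟨hfc, hfin, rfl⟩)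
    · refine ⟨j, (potentialTurningAt_concat_of_lt fm p r hpt.1).mpr ⟨hpt, hzero⟩, ?_⟩
      rw [rfsAt_concat_of_lt fm p r hpt.1, hzero, add_zero]
    · exact ⟨p.length, (potentialTurningAt_concat_length fm p r).mpr ⟨hfc, hfin⟩,
        rfsAt_concat_length fm p r⟩

theorem eq_nil_iff_width_eq_zero_and_RFS_eq_empty (p : Pathway σ) :
    p = [] ↔ width p = 0 ∧ RFS fm p = ∅ := by
  constructor
  · rintro rfl
    simp [width_eq_sup, stateAt, minInit, finalFrom, RFS_eq_image, PotentialTurningAt]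
  · rintro ⟨hw, hrfs⟩
    by_contra hp
    have hstart : stateAt p 0 = 0 := by
      have hle : Multiset.card (stateAt p 0) ≤ width p := by
        rw [width_eq_sup]
        exact Finset.le_sup (f := fun i => Multiset.card (stateAt p i)) (by simp)
      simpa [hw] using hle
    have hturn : PotentialTurningAt fm p 0 :=
      ⟨List.length_pos_iff.mpr hp, by simp [hstart, formalPart]⟩
    rw [RFS_eq_image, Set.image_eq_empty] at hrfs
    exact hrfs.subset hturn

namespace Interleave

variable {α : Type*}

theorem nil_left : ∀ l : List α, Interleave [] l l
  | [] => nil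
  | _ :: l => right (nil_left l)

theorem symm {q₁ q₂ l : List α} (h : Interleave q₁ q₂ l) : Interleave q₂ q₁ l := by
  induction h with
  | nil => exact nil
  | left _ ih => exact right ih
  | right _ ih => exact left ih

theorem eq_of_nil_left {q l : List α} (h : Interleave [] q l) : q = l := by
  induction l generalizing q with
  | nil => cases h; rfl
  | cons a l ih =>
    cases h with
    | right h => rw [ih h]

theorem concat_left {q₁ q₂ l : List α} (a : α) (h : Interleave q₁ q₂ l) :
    Interleave (q₁ ++ [a]) q₂ (l ++ [a]) := by
  induction h with
  | nil => exact left nil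
  | left _ ih => exact left ih
  | right _ ih => exact right ih

theorem concat_iff {q₁ q₂ l : List α} {a : α} :
    Interleave q₁ q₂ (l ++ [a]) ↔
      (∃ t, q₁ = t ++ [a] ∧ Interleave t q₂ l) ∨
        ∃ t, q₂ = t ++ [a] ∧ Interleave q₁ t l := by
  refine ⟨fun h => ?_, ?_⟩
  · induction l generalizing q₁ q₂ with
    | nil =>
      cases h with
      | left h => cases h; exact Or.inl ⟨[], rfl, nil⟩
      | right h => cases h; exact Or.inr ⟨[], rfl, nil⟩
    | cons b l ih =>
      cases h with
      | left h =>
        rcases ih h with ⟨t, rfl, ht⟩ | ⟨t, rfl, ht⟩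
        · exact Or.inl ⟨b :: t, rfl, left ht⟩
        · exact Or.inr ⟨t, rfl, left ht⟩
      | right h =>
        rcases ih h with ⟨t, rfl, ht⟩ | ⟨t, rfl, ht⟩
        · exact Or.inl ⟨t, rfl, right ht⟩
        · exact Or.inr ⟨b :: t, rfl, right ht⟩
  · rintro (⟨t, rfl, ht⟩ | ⟨t, rfl, ht⟩)
    · exact ht.concat_left a
    · exact (ht.symm.concat_left a).symm

end Interleave

/-- `snocSplits fm (DFS fm p) (finalState p) (p ≠ [] ∧ Semiformal fm p) r` collects the pairs of
final states of the splits of `p ++ [r]` whose first part ends with `r`; the split `([r], p)` is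
the second alternative. -/
def snocSplits (D : Set (State σ × State σ)) (F : State σ) (splitsOff : Prop)
    (r : Reaction σ) :
    Set (State σ × State σ) :=
  {T | (∃ T' ∈ D, FormalState fm (r.1 - T'.1) ∧ T = (T'.1 - r.1 + r.2, T'.2)) ∨
    (splitsOff ∧ FormalState fm r.1 ∧ T = (r.2, F))}

theorem mem_snocSplits_iff (p : Pathway σ) (r : Reaction σ) (T : State σ × State σ) :
    T ∈ snocSplits fm (DFS fm p) (finalState p) (p ≠ [] ∧ Semiformal fm p) r ↔
      ∃ c q, q ≠ [] ∧ Interleave c q p ∧ Semiformal fm (c ++ [r]) ∧ Semiformal fm q ∧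
        T = (finalState (c ++ [r]), finalState q) := by
  simp only [snocSplits, DFS, Set.mem_ofPred_eq, semiformal_concat_iff, finalState_concat]
  constructor
  · rintro (⟨_, ⟨c, q, -, hq, hint, hc, hq', rfl⟩, hr, rfl⟩ | ⟨⟨hp, hp'⟩, hr, rfl⟩)
    · exact ⟨c, q, hq, hint, ⟨hc, hr⟩, hq', rfl⟩
    · exact ⟨[], p, hp, Interleave.nil_left p, by simpa [Semiformal, FormalState] using hr, hp',
        by simp⟩
  · rintro ⟨c, q, hq, hint, ⟨hc, hr⟩, hq', rfl⟩
    rcases eq_or_ne c [] with rfl | hc₀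
    · obtain rfl := hint.eq_of_nil_left
      exact Or.inr ⟨⟨hq, hq'⟩, by simpa using hr, by simp⟩
    · exact Or.inl ⟨_, ⟨c, q, hc₀, hq, hint, hc, hq', rfl⟩, hr, rfl⟩

theorem DFS_concat (p : Pathway σ) (r : Reaction σ) :
    let S := snocSplits fm (DFS fm p) (finalState p) (p ≠ [] ∧ Semiformal fm p) r
    DFS fm (p ++ [r]) = S ∪ Prod.swap ⁻¹' S := by
  intro S
  ext T
  rw [Set.mem_union, Set.mem_preimage, mem_snocSplits_iff, mem_snocSplits_iff]
  constructor
  · rintro ⟨q₁, q₂, hq₁, hq₂, hint, hs₁, hs₂, rfl⟩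
    rcases Interleave.concat_iff.mp hint with ⟨c, rfl, hc⟩ | ⟨c, rfl, hc⟩
    · exact Or.inl ⟨c, q₂, hq₂, hc, hs₁, hs₂, rfl⟩
    · exact Or.inr ⟨c, q₁, hq₁, hc.symm, hs₂, hs₁, rfl⟩
  · rintro (⟨c, q, hq, hint, hsc, hsq, rfl⟩ | ⟨c, q, hq, hint, hsc, hsq, hT⟩)
    · exact ⟨c ++ [r], q, by simp, hq, Interleave.concat_iff.mpr (Or.inl ⟨c, rfl, hint⟩),
        hsc, hsq, rfl⟩
    · exact ⟨q, c ++ [r], hq, by simp,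
        Interleave.concat_iff.mpr (Or.inr ⟨c, rfl, hint.symm⟩), hsq, hsc,
        by rw [← Prod.swap_swap T, hT, Prod.swap_prod_mk]⟩

theorem signature_append_general {σ : Type} [DecidableEq σ] (fm : σ → Bool)
    (p₁ p₂ : Pathway σ)
    (hsig : signature fm p₁ = signature fm p₂) (r : Reaction σ) :
    signature fm (p₁ ++ [r]) = signature fm (p₂ ++ [r]) := by
  simp only [signature, Prod.mk.injEq] at hsig ⊢
  obtain ⟨hmin, hfin, hw, hfc, hdfs, hrfs⟩ := hsig
  have hsplit : (p₁ ≠ [] ∧ Semiformal fm p₁) = (p₂ ≠ [] ∧ Semiformal fm p₂) := by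
    rw [Semiformal, Semiformal, hmin, Ne, Ne, eq_nil_iff_width_eq_zero_and_RFS_eq_empty fm,
      eq_nil_iff_width_eq_zero_and_RFS_eq_empty fm, hw, hrfs]
  refine ⟨?_, ?_, ?_, ?_, ?_, ?_⟩
  · rw [minInit_concat, minInit_concat, hmin, hfin]
  · rw [finalState_concat, finalState_concat, hfin]
  · rw [width_concat, width_concat, finalState_concat, finalState_concat, hw, hfin]
  · rw [formalClosure_concat, formalClosure_concat, finalState_concat, finalState_concat, hfc,
      hfin]
  · rw [DFS_concat, DFS_concat, hdfs, hfin, hsplit]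
  · rw [RFS_concat, RFS_concat, finalState_concat, finalState_concat, hrfs, hfc, hmin, hfin]

/-- If two semiformal pathways have the same signature, appending the same reaction
to both yields pathways with the same signature. -/
theorem signature_append {σ : Type} [DecidableEq σ] (fm : σ → Bool)
    (p₁ p₂ : Pathway σ) (h₁ : Semiformal fm p₁) (h₂ : Semiformal fm p₂)
    (hsig : signature fm p₁ = signature fm p₂) (r : Reaction σ) :
    signature fm (p₁ ++ [r]) = signature fm (p₂ ++ [r]) :=
  signature_append_general fm p₁ p₂ hsig r

end CRNVerif
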